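/- arXiv:0805.3559 — 7 statements merged into one kernel-verified Lean document; each statement's English description precedes it below -/
import Mathlib

section
/- Let F : ℝ → ℝ be continuous, z₁' integrable supported in [0,c₁] with total integral -1, z₂' integrable supported in [0,c₂] with total integral -1, and let z'(x) = -∫ z₁'(x-t) z₂'(t) dt. If lim_{b→∞} ∫₀^{c₁} F(x+b) z₁'(x) dx = L and the convergence of b ↦ ∫₀^{c₁} F(x+b) z₁'(x) dx is uniform in the sense needed, then lim_{b→∞} ∫₀^{c₁+c₂} F(x+b) z'(x) dx = L. -/
open MeasureTheory Filter

/-!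
Fubini and the substitution `x = y + t` turn the integral of `F(· + b)` against the negative
convolution `z'` into `-∫ z₂'(t) G_b(t) dt`, where `G_b(t) = ∫₀^{c₁} F(y + t + b) z₁'(y) dy`.
As `b → ∞`, `G_b → L` uniformly on `[0, c₂]`, which carries the support of `z₂'`, so by dominated
convergence the integral tends to `-(∫ z₂') L = L`.
-/

theorem intervalIntegral_eq_integral_of_forall_notMem_Icc {E : Type*} [NormedAddCommGroup E]
    [NormedSpace ℝ E] {g : ℝ → E} {a b : ℝ} (hg : ∀ x, x ∉ Set.Icc a b → g x = 0) :
    ∫ x in a..b, g x = ∫ x, g x := by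
  rcases le_or_gt a b with hab | hba
  · rw [intervalIntegral.integral_of_le hab, ← integral_Icc_eq_integral_Ioc,
      setIntegral_eq_integral_of_forall_compl_eq_zero hg]
  · have hzero : g = 0 := funext fun x => hg x fun hx => (hx.1.trans hx.2).not_gt hba
    simp [hzero]

theorem mul_comp_sub_eq_zero_of_notMem_Icc_add {z₁ z₂ : ℝ → ℝ} {a₁ b₁ a₂ b₂ : ℝ}
    (hz₁ : ∀ x, x ∉ Set.Icc a₁ b₁ → z₁ x = 0) (hz₂ : ∀ x, x ∉ Set.Icc a₂ b₂ → z₂ x = 0)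
    {x : ℝ} (hx : x ∉ Set.Icc (a₁ + a₂) (b₁ + b₂)) (t : ℝ) :
    z₁ (x - t) * z₂ t = 0 := by
  by_cases ht : t ∈ Set.Icc a₂ b₂
  · have hxt : x - t ∉ Set.Icc a₁ b₁ := fun h =>
      hx ⟨by linarith [h.1, ht.1], by linarith [h.2, ht.2]⟩
    rw [hz₁ _ hxt, zero_mul]
  · rw [hz₂ _ ht, mul_zero]

theorem integrable_mul_convolution_integrand {f z₁ z₂ : ℝ → ℝ} {a b : ℝ} (hf : Continuous f)
    (hz₁ : Integrable z₁) (hz₂ : Integrable z₂)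
    (hvanish : ∀ x, x ∉ Set.Icc a b → ∀ t, z₁ (x - t) * z₂ t = 0) :
    Integrable (fun p : ℝ × ℝ => f p.1 * (z₁ (p.1 - p.2) * z₂ p.2)) (volume.prod volume) := by
  set f₀ := (Set.Icc a b).indicator f
  obtain ⟨C, hC⟩ := (isCompact_Icc (a := a) (b := b)).exists_bound_of_continuousOn hf.continuousOn
  have hf₀_bound : ∀ x, ‖f₀ x‖ ≤ max C 0 := fun x => by
    by_cases hx : x ∈ Set.Icc a b
    · simp only [f₀, Set.indicator_of_mem hx]; exact (hC x hx).trans (le_max_left _ _)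
    · simp only [f₀, Set.indicator_of_notMem hx, norm_zero]; exact le_max_right _ _
  have hf₀_meas : Measurable f₀ := hf.measurable.indicator measurableSet_Icc
  have hbdd : Integrable (fun p : ℝ × ℝ => f₀ p.1 * (z₂ p.2 * z₁ (p.1 - p.2)))
      (volume.prod volume) :=
    (hz₂.convolution_integrand (ContinuousLinearMap.mul ℝ ℝ) hz₁).bdd_mul
      (hf₀_meas.comp measurable_fst).aestronglyMeasurable
      (Eventually.of_forall fun p => hf₀_bound p.1)
  refine hbdd.congr (Eventually.of_forall fun p => ?_)
  by_cases hp : p.1 ∈ Set.Icc a b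
  · simp only [f₀, Set.indicator_of_mem hp]; ring
  · simp only [f₀, Set.indicator_of_notMem hp, zero_mul, hvanish _ hp, mul_zero]

theorem integral_mul_convolution_integrand (f z₁ z₂ : ℝ → ℝ) (t : ℝ) :
    ∫ x, f x * (z₁ (x - t) * z₂ t) = z₂ t * ∫ y, f (y + t) * z₁ y := by
  rw [mul_comm, ← integral_mul_const, ← integral_add_right_eq_self _ t]
  simp only [add_sub_cancel_right, mul_assoc]

theorem integral_mul_convolution {f z₁ z₂ : ℝ → ℝ}
    (hint : Integrable (fun p : ℝ × ℝ => f p.1 * (z₁ (p.1 - p.2) * z₂ p.2))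
      (volume.prod volume)) :
    ∫ x, f x * ∫ t, z₁ (x - t) * z₂ t = ∫ t, z₂ t * ∫ y, f (y + t) * z₁ y := by
  simp_rw [← integral_const_mul]
  rw [integral_integral_swap hint]
  simp_rw [integral_const_mul, integral_mul_convolution_integrand]

theorem MeasureTheory.Integrable.mul_integral_comp_add_right {f z₁ z₂ : ℝ → ℝ}
    (hint : Integrable (fun p : ℝ × ℝ => f p.1 * (z₁ (p.1 - p.2) * z₂ p.2))
      (volume.prod volume)) :
    Integrable fun t => z₂ t * ∫ y, f (y + t) * z₁ y := by
  simpa only [integral_mul_convolution_integrand] using hint.integral_prod_right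

theorem tendsto_integral_mul_of_tendstoUniformlyOn {α ι : Type*} [MeasurableSpace α]
    {μ : Measure α} {l : Filter ι} [l.IsCountablyGenerated] {w : α → ℝ} {s : Set α}
    {G : ι → α → ℝ} {L : ℝ} (hw : Integrable w μ) (hw_supp : ∀ t, t ∉ s → w t = 0)
    (hG : TendstoUniformlyOn G (fun _ => L) l s)
    (hmeas : ∀ᶠ i in l, AEStronglyMeasurable (fun t => w t * G i t) μ) :
    Tendsto (fun i => ∫ t, w t * G i t ∂μ) l (nhds ((∫ t, w t ∂μ) * L)) := by
  rw [← integral_mul_const]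
  refine tendsto_integral_filter_of_dominated_convergence (fun t => ‖w t‖ * (‖L‖ + 1)) hmeas
    ?_ (hw.norm.mul_const _) (Eventually.of_forall fun t => ?_)
  · filter_upwards [Metric.tendstoUniformlyOn_iff.1 hG 1 one_pos] with i hi
    refine Eventually.of_forall fun t => ?_
    by_cases ht : t ∈ s
    · rw [norm_mul]
      have hGi : ‖G i t‖ ≤ ‖L‖ + 1 := by
        have := hi t ht
        rw [dist_comm, dist_eq_norm] at this
        linarith [norm_le_norm_add_norm_sub' (G i t) L]
      gcongr
    · simp [hw_supp t ht]
  · by_cases ht : t ∈ s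
    · exact tendsto_const_nhds.mul (hG.tendsto_at ht)
    · simpa [hw_supp t ht] using tendsto_const_nhds

theorem combined_termination_same_limit_general
    (c₁ c₂ : ℝ)
    (F z₁' z₂' : ℝ → ℝ) (L : ℝ)
    (hF : Continuous F)
    (hz₁'int : Integrable z₁') (hz₂'int : Integrable z₂')
    (hz₁'supp : ∀ x, x ∉ Set.Icc (0:ℝ) c₁ → z₁' x = 0)
    (hz₂'supp : ∀ x, x ∉ Set.Icc (0:ℝ) c₂ → z₂' x = 0)
    (hz₂'sum : ∫ x, z₂' x = -1)
    (z' : ℝ → ℝ) (hz' : ∀ x, z' x = -∫ t, z₁' (x - t) * z₂' t)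
    (hunif : TendstoUniformlyOn
      (fun b s => ∫ x in (0:ℝ)..c₁, F (x + s + b) * z₁' x)
      (fun _ => L) atTop (Set.Icc 0 c₂)) :
    Tendsto (fun b => ∫ x in (0:ℝ)..(c₁ + c₂), F (x + b) * z' x) atTop (nhds L) := by
  have hvanish : ∀ x, x ∉ Set.Icc 0 (c₁ + c₂) → ∀ t, z₁' (x - t) * z₂' t = 0 := fun x hx =>
    mul_comp_sub_eq_zero_of_notMem_Icc_add hz₁'supp hz₂'supp (by rwa [zero_add])
  have hprod (b : ℝ) := integrable_mul_convolution_integrand (f := fun x => F (x + b))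
    (by fun_prop) hz₁'int hz₂'int hvanish
  have hG (b t : ℝ) : ∫ y in (0:ℝ)..c₁, F (y + t + b) * z₁' y = ∫ y, F (y + t + b) * z₁' y :=
    intervalIntegral_eq_integral_of_forall_notMem_Icc fun y hy => by rw [hz₁'supp y hy, mul_zero]
  have hrw (b : ℝ) : ∫ x in (0:ℝ)..(c₁ + c₂), F (x + b) * z' x
      = -∫ t, z₂' t * ∫ y in (0:ℝ)..c₁, F (y + t + b) * z₁' y := by
    rw [intervalIntegral_eq_integral_of_forall_notMem_Icc fun x hx => by
      simp [hz' x, hvanish x hx]]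
    simp_rw [hz', mul_neg, integral_neg,
      integral_mul_convolution (f := fun x => F (x + b)) (hprod b), hG]
  have hlim := tendsto_integral_mul_of_tendstoUniformlyOn hz₂'int hz₂'supp hunif
    (Eventually.of_forall fun b => by
      simpa only [hG] using (Integrable.mul_integral_comp_add_right
        (f := fun x => F (x + b)) (hprod b)).aestronglyMeasurable)
  rw [hz₂'sum, neg_one_mul] at hlim
  simpa only [hrw, neg_neg] using hlim.neg

/-- Key combination lemma: if the terminated limit exists for `z₁'`, then it exists,
with the same value, for the negative convolution `z'` of `z₁'` and `z₂'`. -/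
theorem combined_termination_same_limit
    (c₁ c₂ : ℝ) (hc₁ : 0 < c₁) (hc₂ : 0 < c₂)
    (F z₁' z₂' : ℝ → ℝ) (L : ℝ)
    (hF : Continuous F)
    (hz₁'int : Integrable z₁') (hz₂'int : Integrable z₂')
    (hz₁'supp : ∀ x, x ∉ Set.Icc (0:ℝ) c₁ → z₁' x = 0)
    (hz₂'supp : ∀ x, x ∉ Set.Icc (0:ℝ) c₂ → z₂' x = 0)
    (hz₁'sum : ∫ x, z₁' x = -1) (hz₂'sum : ∫ x, z₂' x = -1)
    (z' : ℝ → ℝ) (hz' : ∀ x, z' x = -∫ t, z₁' (x - t) * z₂' t)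
    (hlim : Tendsto (fun b => ∫ x in (0:ℝ)..c₁, F (x + b) * z₁' x) atTop (nhds L))
    (hunif : TendstoUniformlyOn
      (fun b s => ∫ x in (0:ℝ)..c₁, F (x + s + b) * z₁' x)
      (fun _ => L) atTop (Set.Icc 0 c₂)) :
    Tendsto (fun b => ∫ x in (0:ℝ)..(c₁ + c₂), F (x + b) * z' x) atTop (nhds L) :=
  combined_termination_same_limit_general c₁ c₂ F z₁' z₂' L hF hz₁'int hz₂'int hz₁'supp hz₂'supp
    hz₂'sum z' hz' hunif
end

section
/- For α > 0 and the termination function z given by z(x) = 1 for x ≤ 0, z(x) = 1/2 for 0 < x < π/α, z(x) = 0 for x ≥ π/α, the limit lim_{b→∞} [∫_a^b sin(αx) dx + (1/2)∫_b^{b+π/α} sin(αx) dx] exists and equals cos(αa)/α. -/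
/-! The terminated expression does not depend on `b` at all: `sin (α x)` integrates to
`(cos (α a) - cos (α b)) / α`, and averaging over the half period `[b, b + π/α]` contributes
`cos (α b) / α`, because the half-period shift flips the sign of the cosine. -/

open Filter intervalIntegral Real

theorem integral_sin_mul {α : ℝ} (hα : α ≠ 0) (a b : ℝ) :
    ∫ x in a..b, sin (α * x) = (cos (α * a) - cos (α * b)) / α := by
  rw [integral_comp_mul_left (fun x => sin x) hα, integral_sin, smul_eq_mul, inv_mul_eq_div]

theorem integral_sin_mul_half_period {α : ℝ} (hα : α ≠ 0) (b : ℝ) :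
    ∫ x in b..(b + π / α), sin (α * x) = 2 * cos (α * b) / α := by
  have hshift : α * (b + π / α) = α * b + π := by field_simp
  rw [integral_sin_mul hα, hshift, cos_add_pi]
  ring

theorem terminated_integral_sin_eq {α : ℝ} (hα : α ≠ 0) (a b : ℝ) :
    (∫ x in a..b, sin (α * x)) + (1/2) * ∫ x in b..(b + π / α), sin (α * x) =
      cos (α * a) / α := by
  rw [integral_sin_mul hα, integral_sin_mul_half_period hα]
  ring

/-- Example 1: the terminated integral of `sin (α x)` over `[a, ∞)` with the
step termination function (value `1/2` on `(0, π/α)`) equals `cos (α a) / α`. -/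
theorem terminated_integral_sin
    (α a : ℝ) (hα : 0 < α) :
    Tendsto (fun b => (∫ x in a..b, Real.sin (α * x)) +
        (1/2) * ∫ x in b..(b + π / α), Real.sin (α * x))
      atTop (nhds (Real.cos (α * a) / α)) := by
  simp only [terminated_integral_sin_eq hα.ne']
  exact tendsto_const_nhds
end

section
/- For α > 0, lim_{b→∞} [∫_a^b x·cos(αx) dx + (3/4)∫_b^{b+π/α} x·cos(αx) dx + (1/4)∫_{b+π/α}^{b+2π/α} x·cos(αx) dx] exists and equals -cos(αa)/α² - a·sin(αa)/α. -/
/-!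
With the primitive `F x = cos (α x) / α² + x sin (α x) / α` of `x cos (α x)`, a shift by half a
period gives `F (b + π/α) = -F b - π sin (α b) / α²` and `F (b + 2π/α) = F b + 2π sin (α b) / α²`.
The weights `3/4` and `1/4` cancel both `F b` and the `sin (α b)` terms, so the terminated integral
equals `-F a` for every `b`, and the limit is trivial.
-/

open Filter intervalIntegral Real

noncomputable def xCosPrimitive (α x : ℝ) : ℝ :=
  Real.cos (α * x) / α ^ 2 + x * Real.sin (α * x) / α

section

variable {α : ℝ} (hα : α ≠ 0)
include hα

theorem hasDerivAt_xCosPrimitive (x : ℝ) :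
    HasDerivAt (xCosPrimitive α) (x * Real.cos (α * x)) x := by
  have hlin : HasDerivAt (fun x : ℝ => α * x) α x := by
    simpa using (hasDerivAt_id x).const_mul α
  have hcos := (Real.hasDerivAt_cos (α * x)).comp x hlin
  have hsin := (Real.hasDerivAt_sin (α * x)).comp x hlin
  refine ((hcos.div_const (α ^ 2)).add (((hasDerivAt_id' x).mul hsin).div_const α)).congr_deriv ?_
  simp only [Function.comp_apply]
  field_simp
  ring

theorem integral_mul_cos_mul (u v : ℝ) :
    ∫ x in u..v, x * Real.cos (α * x) = xCosPrimitive α v - xCosPrimitive α u :=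
  integral_eq_sub_of_hasDerivAt (fun x _ => hasDerivAt_xCosPrimitive hα x)
    ((by fun_prop : Continuous fun x => x * Real.cos (α * x)).intervalIntegrable u v)

theorem xCosPrimitive_add_pi_div (b : ℝ) :
    xCosPrimitive α (b + π / α) = -xCosPrimitive α b - π * Real.sin (α * b) / α ^ 2 := by
  have hshift : α * (b + π / α) = α * b + π := by field_simp
  rw [xCosPrimitive, xCosPrimitive, hshift, Real.cos_add_pi, Real.sin_add_pi]
  field_simp
  ring

theorem xCosPrimitive_add_two_pi_div (b : ℝ) :
    xCosPrimitive α (b + 2 * π / α) = xCosPrimitive α b + 2 * π * Real.sin (α * b) / α ^ 2 := by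
  have hshift : α * (b + 2 * π / α) = α * b + 2 * π := by field_simp
  rw [xCosPrimitive, xCosPrimitive, hshift, Real.cos_add_two_pi, Real.sin_add_two_pi]
  field_simp
  ring

theorem terminated_integral_mul_cos_mul_eq (a b : ℝ) :
    (∫ x in a..b, x * Real.cos (α * x)) +
        (3/4) * (∫ x in b..(b + π / α), x * Real.cos (α * x)) +
        (1/4) * ∫ x in (b + π / α)..(b + 2 * π / α), x * Real.cos (α * x) =
      -xCosPrimitive α a := by
  simp only [integral_mul_cos_mul hα, xCosPrimitive_add_two_pi_div hα,
    xCosPrimitive_add_pi_div hα]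
  ring

end

/-- Example 2: the terminated integral of `x cos (α x)` over `[a, ∞)` with the
step termination function (3/4 on `(0, π/α)`, 1/4 on `(π/α, 2π/α)`)
equals `-cos (α a)/α² - a sin (α a)/α`. -/
theorem terminated_integral_x_cos
    (α a : ℝ) (hα : 0 < α) :
    Tendsto (fun b => (∫ x in a..b, x * Real.cos (α * x)) +
        (3/4) * (∫ x in b..(b + π / α), x * Real.cos (α * x)) +
        (1/4) * ∫ x in (b + π / α)..(b + 2 * π / α), x * Real.cos (α * x))
      atTop (nhds (-(Real.cos (α * a) / α ^ 2) - a * Real.sin (α * a) / α)) := by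
  have hlimit : -(Real.cos (α * a) / α ^ 2) - a * Real.sin (α * a) / α = -xCosPrimitive α a := by
    rw [xCosPrimitive]
    ring
  rw [hlimit]
  simp only [terminated_integral_mul_cos_mul_eq hα.ne']
  exact tendsto_const_nhds
end

section
/- For α > 0 and any β ∈ ℝ, with weight w = 1/(1 + e^{βπ/α}), the limit lim_{b→∞} [∫_a^b e^{βx} sin(αx) dx + w·∫_b^{b+π/α} e^{βx} sin(αx) dx] exists and equals -e^{βa}(β sin(αa) - α cos(αa))/(α² + β²). -/
/-!
With `F x = e^{βx} (β sin (αx) - α cos (αx)) / (α² + β²)` the primitive of the integrand, shifting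
by a half period gives `F (b + π/α) = -e^{βπ/α} F b`. Hence the terminated integral equals
`F b - F a - (1 + e^{βπ/α})⁻¹ (1 + e^{βπ/α}) F b = -F a` for every `b`: the weight is exactly the
one that cancels the oscillating boundary term, and the limit is that of a constant function.
-/

open Filter intervalIntegral Real

noncomputable def expSinPrimitive (α β x : ℝ) : ℝ :=
  exp (β * x) * (β * sin (α * x) - α * cos (α * x)) / (α ^ 2 + β ^ 2)

lemma hasDerivAt_expSinPrimitive {α β : ℝ} (h : α ^ 2 + β ^ 2 ≠ 0) (x : ℝ) :
    HasDerivAt (expSinPrimitive α β) (exp (β * x) * sin (α * x)) x := by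
  have he : HasDerivAt (fun x => exp (β * x)) (exp (β * x) * β) x :=
    ((hasDerivAt_id x).const_mul β).exp.congr_deriv (by simp)
  have hs : HasDerivAt (fun x => sin (α * x)) (cos (α * x) * α) x :=
    ((hasDerivAt_id x).const_mul α).sin.congr_deriv (by simp)
  have hc : HasDerivAt (fun x => cos (α * x)) (-sin (α * x) * α) x :=
    ((hasDerivAt_id x).const_mul α).cos.congr_deriv (by simp)
  refine ((he.mul ((hs.const_mul β).sub (hc.const_mul α))).div_const _).congr_deriv ?_
  simp only [Pi.sub_apply]
  field_simp
  ring

lemma integral_exp_mul_sin {α β : ℝ} (h : α ^ 2 + β ^ 2 ≠ 0) (u v : ℝ) :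
    ∫ x in u..v, exp (β * x) * sin (α * x) = expSinPrimitive α β v - expSinPrimitive α β u :=
  integral_eq_sub_of_hasDerivAt (fun x _ => hasDerivAt_expSinPrimitive h x)
    (by apply Continuous.intervalIntegrable; fun_prop)

lemma expSinPrimitive_add_pi_div {α : ℝ} (hα : α ≠ 0) (β x : ℝ) :
    expSinPrimitive α β (x + π / α) = -exp (β * π / α) * expSinPrimitive α β x := by
  have harg : α * (x + π / α) = α * x + π := by field_simp
  have hexp : exp (β * (x + π / α)) = exp (β * x) * exp (β * π / α) := by
    rw [← exp_add]; ring_nf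
  simp only [expSinPrimitive, harg, hexp, sin_add_pi, cos_add_pi]
  ring

/-- Example 3: the terminated integral of `e^{βx} sin (α x)` over `[a, ∞)` with the
step termination function of height `1/(1 + e^{βπ/α})` on `(0, π/α)` equals
`-e^{βa} (β sin (α a) - α cos (α a)) / (α² + β²)`. -/
theorem terminated_integral_exp_sin
    (α β a : ℝ) (hα : 0 < α) :
    Tendsto (fun b => (∫ x in a..b, Real.exp (β * x) * Real.sin (α * x)) +
        (1 / (1 + Real.exp (β * π / α))) *
          ∫ x in b..(b + π / α), Real.exp (β * x) * Real.sin (α * x))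
      atTop
      (nhds (-(Real.exp (β * a) * (β * Real.sin (α * a) - α * Real.cos (α * a)) /
        (α ^ 2 + β ^ 2)))) := by
  have hαβ : α ^ 2 + β ^ 2 ≠ 0 := by positivity
  have hw : 1 + exp (β * π / α) ≠ 0 := by positivity
  have hconst : ∀ b : ℝ, (∫ x in a..b, exp (β * x) * sin (α * x)) +
      1 / (1 + exp (β * π / α)) * ∫ x in b..(b + π / α), exp (β * x) * sin (α * x) =
        -expSinPrimitive α β a := by
    intro b
    rw [integral_exp_mul_sin hαβ, integral_exp_mul_sin hαβ,
      expSinPrimitive_add_pi_div hα.ne']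
    field_simp
    ring
  simp only [hconst]
  exact tendsto_const_nhds
end

section
/- For y > 0 and a > 0, the derivative with respect to y of the cosine-integral expression ∫_a^∞ cos(xy)/x dx = -Ci(ay) equals -cos(ay)/y, and this coincides with the terminated integral of ∂/∂y (cos(xy)/x) = -sin(xy): namely lim_{b→∞}[∫_a^b (-sin(xy)) dx + (1/2)∫_b^{b+π/y} (-sin(xy)) dx] = -cos(ay)/y. -/
/-!
Substituting `u = x t` turns `∫_a^b cos (x t)/x dx` into `∫_{at}^{bt} cos u/u du`, so letting
`b → ∞` gives `I t = I 1 - ∫_a^{at} cos u/u du` for every `t > 0`, and the fundamental theorem of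
calculus yields `I'(y) = -cos (a y)/y`. On the other side, `∫_a^b -sin (x y) dx` equals
`(cos (b y) - cos (a y))/y`; the oscillating term `cos (b y)/y` is cancelled exactly by half the
integral over the next half-period, so the terminated integral is constant in `b`.
-/

open Filter intervalIntegral Real

lemma integral_comp_mul_div_self (f : ℝ → ℝ) (a b : ℝ) {t : ℝ} (ht : t ≠ 0) :
    ∫ x in a..b, f (x * t) / x = ∫ u in a * t..b * t, f u / u := by
  have hscale : ∀ x : ℝ, f (x * t) / x = t * (f (x * t) / (x * t)) := fun x => by
    rw [← mul_div_assoc, mul_comm t, mul_div_mul_right _ _ ht]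
  simp_rw [hscale, integral_const_mul, integral_comp_mul_right (fun u => f u / u) ht,
    smul_eq_mul, ← mul_assoc, mul_inv_cancel₀ ht, one_mul]

section ScaledIntegral

variable {f : ℝ → ℝ}

lemma intervalIntegrable_div_self_of_pos (hf : Continuous f) {c d : ℝ} (hc : 0 < c)
    (hd : 0 < d) : IntervalIntegrable (fun u => f u / u) MeasureTheory.volume c d :=
  ContinuousOn.intervalIntegrable fun _ hx =>
    (hf.continuousAt.div continuousAt_id
      (lt_of_lt_of_le (lt_min hc hd) hx.1).ne').continuousWithinAt

lemma tendsto_integral_comp_mul_div_self (hf : Continuous f) {a t L : ℝ} (ha : 0 < a)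
    (ht : 0 < t) (hL : Tendsto (fun b => ∫ x in a..b, f x / x) atTop (nhds L)) :
    Tendsto (fun b => ∫ x in a..b, f (x * t) / x) atTop
      (nhds (L - ∫ u in a..a * t, f u / u)) := by
  refine ((hL.comp (tendsto_id.atTop_mul_const ht)).sub_const _).congr' ?_
  filter_upwards [eventually_gt_atTop 0] with b hb
  rw [integral_comp_mul_div_self f a b ht.ne', Function.comp_apply, id,
    integral_interval_sub_left (intervalIntegrable_div_self_of_pos hf ha (mul_pos hb ht))
      (intervalIntegrable_div_self_of_pos hf ha (mul_pos ha ht))]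

lemma hasDerivAt_integral_mul_div_self (hf : Continuous f) {a y : ℝ} (ha : 0 < a)
    (hy : 0 < y) :
    HasDerivAt (fun t => ∫ u in a..a * t, f u / u) (f (a * y) / y) y := by
  have hFTC : HasDerivAt (fun s => ∫ u in a..s, f u / u) (f (a * y) / (a * y)) (a * y) :=
    integral_hasDerivAt_right (intervalIntegrable_div_self_of_pos hf ha (mul_pos ha hy))
      ((hf.measurable.div measurable_id).stronglyMeasurable.stronglyMeasurableAtFilter)
      (hf.continuousAt.div continuousAt_id (mul_pos ha hy).ne')
  have hscale : HasDerivAt (fun t => a * t) a y := by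
    simpa using (hasDerivAt_id y).const_mul a
  rw [show f (a * y) / y = f (a * y) / (a * y) * a by field_simp]
  exact hFTC.comp y hscale

end ScaledIntegral

lemma integral_neg_sin_mul {y : ℝ} (hy : y ≠ 0) (c d : ℝ) :
    ∫ x in c..d, -sin (x * y) = (cos (d * y) - cos (c * y)) / y := by
  rw [intervalIntegral.integral_neg, integral_comp_mul_right sin hy, integral_sin, smul_eq_mul]
  field_simp
  ring

lemma terminated_integral_neg_sin_mul_eq {y : ℝ} (hy : y ≠ 0) (a b : ℝ) :
    (∫ x in a..b, -sin (x * y)) + (1/2) * ∫ x in b..(b + π / y), -sin (x * y) =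
      -(cos (a * y) / y) := by
  have hshift : (b + π / y) * y = b * y + π := by field_simp
  rw [integral_neg_sin_mul hy, integral_neg_sin_mul hy, hshift, cos_add_pi]
  field_simp
  ring

/-- Example 4: if `I y` is the (conditionally convergent) improper integral
`∫_a^∞ cos (x y)/x dx`, then `I` is differentiable at `y > 0` with derivative
`-cos (a y)/y`, and this value equals the terminated integral of
`∂/∂y (cos (x y)/x) = -sin (x y)` over `[a, ∞)`. -/
theorem deriv_under_terminated_integral_cos
    (a y : ℝ) (ha : 0 < a) (hy : 0 < y)
    (I : ℝ → ℝ)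
    (hI : ∀ t : ℝ, 0 < t →
      Tendsto (fun b => ∫ x in a..b, Real.cos (x * t) / x) atTop (nhds (I t))) :
    HasDerivAt I (-(Real.cos (a * y) / y)) y ∧
    Tendsto (fun b => (∫ x in a..b, -Real.sin (x * y)) +
        (1/2) * ∫ x in b..(b + π / y), -Real.sin (x * y))
      atTop (nhds (-(Real.cos (a * y) / y))) := by
  have hI_eq : ∀ t, 0 < t → I t = I 1 - ∫ u in a..a * t, cos u / u := fun t ht =>
    tendsto_nhds_unique (hI t ht) <| tendsto_integral_comp_mul_div_self continuous_cos ha ht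
      (by simpa only [mul_one] using hI 1 one_pos)
  refine ⟨?_, ?_⟩
  · refine ((hasDerivAt_integral_mul_div_self continuous_cos ha hy).const_sub (I 1)
      |>.congr_of_eventuallyEq ?_)
    filter_upwards [eventually_gt_nhds hy] with t ht using hI_eq t ht
  · simpa only [terminated_integral_neg_sin_mul_eq hy.ne'] using tendsto_const_nhds
end

section
/- Invariance under affine substitution: let f have antiderivative F, let z be a termination function with support parameter γ, and suppose lim_{β→∞} [∫_α^β f(u) du + ∫_β^{β+γ} f(u) ζ(u-β) du] = L. If u = r + sx with s > 0, α = r + sa, γ = sc, then with g(x) = s·f(r+sx) and z(x) = ζ(sx), z is again a termination function (not depending on b) and lim_{b→∞} [∫_a^b g(x) dx + ∫_b^{b+c} g(x) z(x-b) dx] = L. -/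
open Filter intervalIntegral Real

/-! The substitution `u = r + s x` carries the terminated integral of `(g, z)` at `b` onto that
of `(f, ζ)` at `β = r + s b`, and `β → ∞` as `b → ∞`. -/

noncomputable def terminatedIntegral (f ζ : ℝ → ℝ) (α γ β : ℝ) : ℝ :=
  (∫ u in α..β, f u) + ∫ u in β..(β + γ), f u * ζ (u - β)

theorem integral_deriv_comp_mul_left (g : ℝ → ℝ) (s a b : ℝ) :
    ∫ x in a..b, deriv (fun t => g (s * t)) x = ∫ x in s * a..s * b, deriv g x := by
  simp only [deriv_comp_mul_left s g, integral_smul, smul_integral_comp_mul_left]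

theorem integral_const_mul_comp_add_mul (h : ℝ → ℝ) (r s a b : ℝ) :
    ∫ x in a..b, s * h (r + s * x) = ∫ u in (r + s * a)..(r + s * b), h u := by
  rw [integral_const_mul, ← smul_eq_mul, smul_integral_comp_add_mul]

theorem terminatedIntegral_comp_affine (f ζ : ℝ → ℝ) {s : ℝ} (hs : s ≠ 0) (r a γ b : ℝ) :
    terminatedIntegral (fun x => s * f (r + s * x)) (fun x => ζ (s * x)) a (γ / s) b =
      terminatedIntegral f ζ (r + s * a) γ (r + s * b) := by
  have hshift : ∀ x, s * f (r + s * x) * ζ (s * (x - b)) =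
      s * (f (r + s * x) * ζ (r + s * x - (r + s * b))) := fun x => by
    rw [show s * (x - b) = r + s * x - (r + s * b) by ring]; ring
  unfold terminatedIntegral
  simp only [hshift, integral_const_mul_comp_add_mul f,
    integral_const_mul_comp_add_mul (fun u => f u * ζ (u - (r + s * b)))]
  rw [mul_add, mul_div_cancel₀ _ hs, add_assoc]

theorem terminated_integral_affine_substitution_general
    (r s γ a L : ℝ) (hs : 0 < s)
    (f ζ : ℝ → ℝ)
    (hζ1 : ∀ x ≤ 0, ζ x = 1) (hζ0 : ∀ x ≥ γ, ζ x = 0)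
    (hζsum : ∫ x in (0:ℝ)..γ, deriv ζ x = -1)
    (hL : Tendsto (fun β => (∫ u in (r + s * a)..β, f u) +
        ∫ u in β..(β + γ), f u * ζ (u - β)) atTop (nhds L)) :
    (∀ x ≤ 0, ζ (s * x) = 1) ∧
    (∀ x ≥ γ / s, ζ (s * x) = 0) ∧
    (∫ x in (0:ℝ)..(γ / s), deriv (fun t => ζ (s * t)) x = -1) ∧
    Tendsto (fun b => (∫ x in a..b, s * f (r + s * x)) +
        ∫ x in b..(b + γ / s), s * f (r + s * x) * ζ (s * (x - b)))
      atTop (nhds L) := by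
  refine ⟨fun x hx => hζ1 _ (mul_nonpos_of_nonneg_of_nonpos hs.le hx),
    fun x hx => hζ0 _ ((div_le_iff₀' hs).mp hx), ?_, ?_⟩
  · rw [integral_deriv_comp_mul_left, mul_zero, mul_div_cancel₀ _ hs.ne', hζsum]
  · have hu : Tendsto (fun b => r + s * b) atTop atTop :=
      tendsto_atTop_add_const_left _ r (tendsto_id.const_mul_atTop hs)
    exact (hL.comp hu).congr fun b => (terminatedIntegral_comp_affine f ζ hs.ne' r a γ b).symm

/-- Affine change of variable `u = r + s x` (`s > 0`) preserves the terminated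
integral: `z x = ζ (s x)` is again a termination function (independent of `b`)
and the terminated limit for `g x = s f (r + s x)` equals the original limit `L`. -/
theorem terminated_integral_affine_substitution
    (r s γ a L : ℝ) (hs : 0 < s) (hγ : 0 < γ)
    (f ζ : ℝ → ℝ)
    (hζ1 : ∀ x ≤ 0, ζ x = 1) (hζ0 : ∀ x ≥ γ, ζ x = 0)
    (hζd : Differentiable ℝ ζ)
    (hζsum : ∫ x in (0:ℝ)..γ, deriv ζ x = -1)
    (hL : Tendsto (fun β => (∫ u in (r + s * a)..β, f u) +
        ∫ u in β..(β + γ), f u * ζ (u - β)) atTop (nhds L)) :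
    (∀ x ≤ 0, ζ (s * x) = 1) ∧
    (∀ x ≥ γ / s, ζ (s * x) = 0) ∧
    (∫ x in (0:ℝ)..(γ / s), deriv (fun t => ζ (s * t)) x = -1) ∧
    Tendsto (fun b => (∫ x in a..b, s * f (r + s * x)) +
        ∫ x in b..(b + γ / s), s * f (r + s * x) * ζ (s * (x - b)))
      atTop (nhds L) :=
  terminated_integral_affine_substitution_general r s γ a L hs f ζ hζ1 hζ0 hζsum hL
end

section
/- For the square wave f(x) = 1 - 2·(⌊x⌋ mod 2) on [0,∞), with termination function z equal to 1/2 on (0,1) and 0 on [1,∞), the terminated integral exists and equals 1/2: lim_{b→∞} [∫_0^b f(x) dx + (1/2)∫_b^{b+1} f(x) dx] = 1/2. -/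
/-!
With `G b = ∫₀ᵇ f`, antiperiodicity `f (x + 1) = -f x` gives `G b + G (b + 1) = ∫₀¹ f = 1`, so
`G b + ½ ∫_b^{b+1} f = ½ (G b + G (b + 1)) = ½` for every `b`: the terminated integral is constant.
-/

open Filter intervalIntegral Real MeasureTheory

namespace Function.Antiperiodic

variable {E : Type*} [NormedAddCommGroup E] [NormedSpace ℝ E] {g : ℝ → E} {c : ℝ}

theorem intervalIntegral_add_intervalIntegral_add_eq (hg : Antiperiodic g c)
    (hint : ∀ a b, IntervalIntegrable g volume a b) (b : ℝ) :
    (∫ x in 0..b, g x) + ∫ x in 0..b + c, g x = ∫ x in 0..c, g x := by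
  have hshift : ∫ x in c..b + c, g x = -∫ x in 0..b, g x := by
    calc ∫ x in c..b + c, g x = ∫ x in 0..b, g (x + c) := by
          rw [integral_comp_add_right, zero_add]
      _ = -∫ x in 0..b, g x := by simp only [hg _, intervalIntegral.integral_neg]
  rw [← integral_add_adjacent_intervals (hint 0 c) (hint c (b + c)), hshift]
  abel

theorem intervalIntegral_add_half_intervalIntegral_add_eq (hg : Antiperiodic g c)
    (hint : ∀ a b, IntervalIntegrable g volume a b) (b : ℝ) :
    (∫ x in 0..b, g x) + (1 / 2 : ℝ) • ∫ x in b..b + c, g x = (1 / 2 : ℝ) • ∫ x in 0..c, g x := by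
  rw [← integral_interval_sub_left (hint 0 (b + c)) (hint 0 b),
    ← hg.intervalIntegral_add_intervalIntegral_add_eq hint b]
  module

end Function.Antiperiodic

noncomputable def squareWave (x : ℝ) : ℝ := 1 - 2 * ((Int.floor x % 2 : ℤ) : ℝ)

theorem squareWave_antiperiodic : Function.Antiperiodic squareWave 1 := fun x => by
  have : (⌊x⌋ + 1) % 2 = 1 - ⌊x⌋ % 2 := by omega
  simp only [squareWave, Int.floor_add_one, this]
  push_cast
  ring

theorem abs_squareWave (x : ℝ) : |squareWave x| = 1 := by
  rcases Int.emod_two_eq_zero_or_one ⌊x⌋ with h | h <;> norm_num [squareWave, h]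

theorem measurable_squareWave : Measurable squareWave :=
  measurable_const.sub (measurable_const.mul
    ((measurable_from_top (f := fun n : ℤ => ((n % 2 : ℤ) : ℝ))).comp Int.measurable_floor))

theorem intervalIntegrable_squareWave (a b : ℝ) : IntervalIntegrable squareWave volume a b :=
  (intervalIntegrable_iff.2 <| Measure.integrableOn_of_bounded (M := 1) measure_Ioc_lt_top.ne
    measurable_squareWave.aestronglyMeasurable (ae_of_all _ fun x => (abs_squareWave x).le))

theorem integral_squareWave_zero_one : ∫ x in (0 : ℝ)..1, squareWave x = 1 := by
  have h : Set.EqOn squareWave (fun _ => 1) (Set.Ioo 0 1) := fun x hx => by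
    simp [squareWave, Int.floor_eq_zero_iff.2 ⟨hx.1.le, hx.2⟩]
  simp [integral_congr_Ioo_of_le zero_le_one h]

/-- Example 6 (first part): the terminated integral of the ±1 square wave
`f x = 1 - 2 (⌊x⌋ mod 2)` over `[0, ∞)`, with termination function `1/2` on `(0,1)`,
exists and equals `1/2`. -/
theorem terminated_integral_square_wave :
    Tendsto (fun b => (∫ x in (0:ℝ)..b, (1 - 2 * ((Int.floor x % 2 : ℤ) : ℝ))) +
        (1/2) * ∫ x in b..(b + 1), (1 - 2 * ((Int.floor x % 2 : ℤ) : ℝ)))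
      atTop (nhds (1/2)) := by
  have h (b : ℝ) : (∫ x in (0 : ℝ)..b, squareWave x) + (1 / 2) * ∫ x in b..b + 1, squareWave x
      = 1 / 2 := by
    simpa [integral_squareWave_zero_one] using
      squareWave_antiperiodic.intervalIntegral_add_half_intervalIntegral_add_eq
        intervalIntegrable_squareWave b
  exact tendsto_const_nhds.congr fun b => (h b).symm
end
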